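/- Over any ring A, the class of A-modules of finite Gorenstein projective dimension is closed under extensions and under direct summands. -/

import Mathlib

open CategoryTheory CategoryTheory.Limits

universe v u

variable (C : Type u) [Category.{v} C] [Abelian C]

/-- A totally acyclic complex of projectives. -/
def IsTotallyAcyclicProjComplex (P : ChainComplex C (ℤ)) : Prop :=
  (∀ n, Projective (P.X n)) ∧ (∀ n, P.ExactAt n) ∧
    ∀ (Q : C), Projective Q → ∀ (n : ℤ) (f : P.X n ⟶ Q), P.d (n + 1) n ≫ f = 0 →
      ∃ g : P.X (n - 1) ⟶ Q, P.d n (n - 1) ≫ g = f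

/-- A totally acyclic complex of injectives. -/
def IsTotallyAcyclicInjComplex (I : ChainComplex C (ℤ)) : Prop :=
  (∀ n, Injective (I.X n)) ∧ (∀ n, I.ExactAt n) ∧
    ∀ (E : C), Injective E → ∀ (n : ℤ) (f : E ⟶ I.X n), f ≫ I.d n (n - 1) = 0 →
      ∃ g : E ⟶ I.X (n + 1), g ≫ I.d (n + 1) n = f

variable {C}

/-- Gorenstein projective object: a cycle of a totally acyclic complex of projectives. -/
def IsGorensteinProjective (G : C) : Prop :=
  ∃ P : ChainComplex C (ℤ), IsTotallyAcyclicProjComplex C P ∧ ∃ j : ℤ, Nonempty (G ≅ P.cycles j)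

/-- Gorenstein injective object: a cycle of a totally acyclic complex of injectives. -/
def IsGorensteinInjective (H : C) : Prop :=
  ∃ I : ChainComplex C (ℤ), IsTotallyAcyclicInjComplex C I ∧ ∃ j : ℤ, Nonempty (H ≅ I.cycles j)

/-- `0 → X → Y → Z → 0` is a short exact sequence. -/
def IsShortExactSeq {X Y Z : C} (f : X ⟶ Y) (g : Y ⟶ Z) : Prop :=
  ∃ w : f ≫ g = 0, (ShortComplex.mk f g w).ShortExact

/-- Projective dimension at most `n`. -/
def pdLE : ℕ → C → Prop
  | 0, M => Projective M
  | n + 1, M => ∃ (K P : C) (f : K ⟶ P) (g : P ⟶ M),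
      IsShortExactSeq f g ∧ Projective P ∧ pdLE n K

/-- Injective dimension at most `n`. -/
def idLE : ℕ → C → Prop
  | 0, M => Injective M
  | n + 1, M => ∃ (J L : C) (f : M ⟶ J) (g : J ⟶ L),
      IsShortExactSeq f g ∧ Injective J ∧ idLE n L

/-- Gorenstein projective dimension at most `n`. -/
def gpdLE : ℕ → C → Prop
  | 0, M => IsGorensteinProjective M
  | n + 1, M => ∃ (K G : C) (f : K ⟶ G) (g : G ⟶ M),
      IsShortExactSeq f g ∧ IsGorensteinProjective G ∧ gpdLE n K

/-- Gorenstein injective dimension at most `n`. -/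
def gidLE : ℕ → C → Prop
  | 0, M => IsGorensteinInjective M
  | n + 1, M => ∃ (H L : C) (f : M ⟶ H) (g : H ⟶ L),
      IsShortExactSeq f g ∧ IsGorensteinInjective H ∧ gidLE n L

/-- Vanishing of `Ext^i` in the category of `A`-modules. -/
def extVanish (A : Type u) [Ring A] (X Y : ModuleCat.{u} A) (i : ℕ) : Prop :=
  Subsingleton (((Ext ℤ (ModuleCat.{u} A) i).obj (Opposite.op X)).obj Y)

/-!
Every Gorenstein projective is the quotient of a projective by a Gorenstein projective
submodule, and Gorenstein projectives are stable under adding a projective summand and under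
direct sums (take the corresponding sums of totally acyclic complexes); the last two facts pass
to `gpdLE n`. Pulling short exact sequences back along such presentations, a joint recursion
bounds the Gorenstein projective dimension of the middle term of `0 → X → Y → Z → 0` by
`gpd Z + gpd X + 1`, and that of `Z` by `gpd X + gpd Y + 1`. Closure under summands is an
Eilenberg swindle: if `M` is a retract of `G` via `s`, `r` and `e = s ∘ r`, then
`ξ y i = (1 - e) (y i) + e (y (i - 1))` (with `y (-1) = 0`) is a split injection of `G^(ℕ)` into
itself with cokernel `M`.
-/

section

variable {A : Type u} [Ring A]

theorem Function.Exact.linearMap_prodMap {M N P M' N' P' : Type*} [AddCommGroup M]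
    [AddCommGroup N] [AddCommGroup P] [AddCommGroup M'] [AddCommGroup N'] [AddCommGroup P']
    [Module A M] [Module A N] [Module A P] [Module A M'] [Module A N'] [Module A P']
    {f : M →ₗ[A] N} {g : N →ₗ[A] P} {f' : M' →ₗ[A] N'} {g' : N' →ₗ[A] P'}
    (h : Function.Exact f g) (h' : Function.Exact f' g') :
    Function.Exact (f.prodMap f') (g.prodMap g') := by
  rw [LinearMap.exact_iff, LinearMap.ker_prodMap, LinearMap.range_prodMap,
    h.linearMap_ker_eq, h'.linearMap_ker_eq]

theorem Function.Exact.dfinsupp_mapRange {ι : Type*} {M N P : ι → Type*}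
    [∀ i, AddCommGroup (M i)] [∀ i, AddCommGroup (N i)] [∀ i, AddCommGroup (P i)]
    [∀ i, Module A (M i)] [∀ i, Module A (N i)] [∀ i, Module A (P i)]
    {f : ∀ i, M i →ₗ[A] N i} {g : ∀ i, N i →ₗ[A] P i} (h : ∀ i, Function.Exact (f i) (g i)) :
    Function.Exact (DFinsupp.mapRange.linearMap f) (DFinsupp.mapRange.linearMap g) := by
  rw [LinearMap.exact_iff, DFinsupp.ker_mapRangeLinearMap, DFinsupp.range_mapRangeLinearMap]
  simp only [fun i => (h i).linearMap_ker_eq]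

theorem isShortExactSeq_of_splitting {X Y Z : C} (f : X ⟶ Y) (g : Y ⟶ Z) (f' : Y ⟶ X)
    (g' : Z ⟶ Y) (hf : f ≫ f' = 𝟙 X) (hg : g' ≫ g = 𝟙 Z) (hid : f' ≫ f + g ≫ g' = 𝟙 Y) :
    IsShortExactSeq f g := by
  have w : f ≫ g = 0 := by
    simpa [reassoc_of% hf, hg] using congrArg (fun φ => f ≫ φ ≫ g) hid
  exact ⟨w, ShortComplex.Splitting.shortExact ⟨f', g', hf, hg, hid⟩⟩

theorem isShortExactSeq_iff {X Y Z : ModuleCat.{u} A} (f : X ⟶ Y) (g : Y ⟶ Z) :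
    IsShortExactSeq f g ↔
      Function.Injective f.hom ∧ Function.Exact f.hom g.hom ∧ Function.Surjective g.hom := by
  constructor
  · rintro ⟨w, h⟩
    exact ⟨h.moduleCat_injective_f,
      (ShortComplex.ShortExact.moduleCat_exact_iff_function_exact _).mp h.exact,
      h.moduleCat_surjective_g⟩
  · rintro ⟨hf, hfg, hg⟩
    have w : f ≫ g = 0 := by ext x; exact hfg.apply_apply_eq_zero x
    refine ⟨w, ShortComplex.ShortExact.mk' ?_ ?_ ?_⟩
    · exact (ShortComplex.ShortExact.moduleCat_exact_iff_function_exact _).mpr hfg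
    · exact (ModuleCat.mono_iff_injective f).mpr hf
    · exact (ModuleCat.epi_iff_surjective g).mpr hg

namespace IsShortExactSeq

theorem comp_iso {X Y Z Z' : ModuleCat.{u} A} {f : X ⟶ Y} {g : Y ⟶ Z} (h : IsShortExactSeq f g)
    (e : Z ≅ Z') : IsShortExactSeq f (g ≫ e.hom) := by
  obtain ⟨hf, hfg, hg⟩ := (isShortExactSeq_iff f g).mp h
  refine (isShortExactSeq_iff _ _).mpr ⟨hf, ?_, e.toLinearEquiv.surjective.comp hg⟩
  exact e.toLinearEquiv.postcomp_exact_iff_exact.mpr hfg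

theorem nonempty_iso_prod {X E Q : ModuleCat.{u} A} {f : X ⟶ E} {p : E ⟶ Q}
    (h : IsShortExactSeq f p) (hQ : Projective Q) : Nonempty (E ≅ ModuleCat.of A (X × Q)) := by
  obtain ⟨hf, hfp, hp⟩ := (isShortExactSeq_iff f p).mp h
  have : Module.Projective A Q := (IsProjective.iff_projective Q).mpr hQ
  obtain ⟨l, hl⟩ := Module.projective_lifting_property p.hom LinearMap.id hp
  exact ⟨((hfp.splitSurjectiveEquiv hf) ⟨l, hl⟩).1.toModuleIso⟩

theorem exists_pullback {X Y Z S Q : ModuleCat.{u} A} {f : X ⟶ Y} {g : Y ⟶ Z} {s : S ⟶ Q}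
    {q : Q ⟶ Z} (h : IsShortExactSeq f g) (h' : IsShortExactSeq s q) :
    ∃ (E : ModuleCat.{u} A) (s' : S ⟶ E) (g' : E ⟶ Y) (f' : X ⟶ E) (q' : E ⟶ Q),
      IsShortExactSeq s' g' ∧ IsShortExactSeq f' q' := by
  obtain ⟨hf, hfg, hg⟩ := (isShortExactSeq_iff f g).mp h
  obtain ⟨hs, hsq, hq⟩ := (isShortExactSeq_iff s q).mp h'
  let E := LinearMap.eqLocus (g.hom ∘ₗ LinearMap.fst A Y Q) (q.hom ∘ₗ LinearMap.snd A Y Q)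
  refine ⟨ModuleCat.of A E,
    ModuleCat.ofHom ((LinearMap.inr A Y Q ∘ₗ s.hom).codRestrict E fun c => by
      simp [E, hsq.apply_apply_eq_zero]),
    ModuleCat.ofHom (LinearMap.fst A Y Q ∘ₗ E.subtype),
    ModuleCat.ofHom ((LinearMap.inl A Y Q ∘ₗ f.hom).codRestrict E fun x => by
      simp [E, hfg.apply_apply_eq_zero]),
    ModuleCat.ofHom (LinearMap.snd A Y Q ∘ₗ E.subtype),
    (isShortExactSeq_iff _ _).mpr ⟨?_, ?_, ?_⟩, (isShortExactSeq_iff _ _).mpr ⟨?_, ?_, ?_⟩⟩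
  · exact fun a b hab => hs (congrArg (fun w : E => w.1.2) hab)
  · rintro ⟨⟨y, c⟩, hyc : g y = q c⟩
    constructor
    · rintro (rfl : y = 0)
      obtain ⟨c', rfl⟩ := (hsq c).mp (by rw [← hyc, map_zero])
      exact ⟨c', rfl⟩
    · rintro ⟨c', hc'⟩
      exact (congrArg (fun w : E => w.1.1) hc').symm
  · intro y
    obtain ⟨c, hc⟩ := hq (g y)
    exact ⟨⟨(y, c), hc.symm⟩, rfl⟩
  · exact fun a b hab => hf (congrArg (fun w : E => w.1.1) hab)
  · rintro ⟨⟨y, c⟩, hyc : g y = q c⟩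
    constructor
    · rintro (rfl : c = 0)
      obtain ⟨x, rfl⟩ := (hfg y).mp (by rw [hyc, map_zero])
      exact ⟨x, rfl⟩
    · rintro ⟨x, hx⟩
      exact (congrArg (fun w : E => w.1.2) hx).symm
  · intro c
    obtain ⟨y, hy⟩ := hg (q c)
    exact ⟨⟨(y, c), hy⟩, rfl⟩

theorem exists_ker_comp {K G E S Y : ModuleCat.{u} A} {k : K ⟶ G} {p : G ⟶ E} {s : S ⟶ E}
    {t : E ⟶ Y} (h : IsShortExactSeq k p) (h' : IsShortExactSeq s t) :
    ∃ (T : ModuleCat.{u} A) (a : K ⟶ T) (b : T ⟶ S) (c : T ⟶ G),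
      IsShortExactSeq a b ∧ IsShortExactSeq c (p ≫ t) := by
  obtain ⟨hk, hkp, hp⟩ := (isShortExactSeq_iff k p).mp h
  obtain ⟨hs, hst, ht⟩ := (isShortExactSeq_iff s t).mp h'
  let T := LinearMap.ker (t.hom ∘ₗ p.hom)
  let eS : S ≃ₗ[A] LinearMap.ker t.hom := (LinearEquiv.ofInjective s.hom hs).trans
    (LinearEquiv.ofEq _ _ hst.linearMap_ker_eq.symm)
  refine ⟨ModuleCat.of A T,
    ModuleCat.ofHom (k.hom.codRestrict T fun x => by simp [T, hkp.apply_apply_eq_zero]),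
    ModuleCat.ofHom (eS.symm.toLinearMap ∘ₗ
      (p.hom ∘ₗ T.subtype).codRestrict (LinearMap.ker t.hom) fun w => w.2),
    ModuleCat.ofHom T.subtype,
    (isShortExactSeq_iff _ _).mpr ⟨?_, ?_, ?_⟩, (isShortExactSeq_iff _ _).mpr
      ⟨Submodule.injective_subtype _, LinearMap.exact_subtype_ker_map _, ht.comp hp⟩⟩
  · exact fun a b hab => hk (congrArg Subtype.val hab)
  · rintro ⟨w, hw⟩
    rw [ModuleCat.hom_ofHom, LinearMap.comp_apply, LinearEquiv.coe_coe,
      LinearEquiv.map_eq_zero_iff]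
    constructor
    · intro h0
      obtain ⟨x, hx⟩ := (hkp w).mp (congrArg Subtype.val h0)
      exact ⟨x, Subtype.ext hx⟩
    · rintro ⟨x, hx⟩
      apply Subtype.ext
      obtain rfl : k.hom x = w := congrArg Subtype.val hx
      exact hkp.apply_apply_eq_zero x
  · intro c
    obtain ⟨w, hw⟩ := hp (s c)
    refine ⟨⟨w, ?_⟩, ?_⟩
    · simp [T, hw, hst.apply_apply_eq_zero]
    · exact eS.symm_apply_eq.mpr (Subtype.ext hw)

end IsShortExactSeq

namespace ChainComplex

variable (P : ChainComplex (ModuleCat.{u} A) ℤ)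

noncomputable def cyclesIsoKer (j : ℤ) :
    P.cycles j ≅ ModuleCat.of A (LinearMap.ker (P.d j (j - 1)).hom) :=
  IsLimit.conePointUniqueUpToIso (P.cyclesIsKernel j (j - 1) (by simp))
    (ModuleCat.kernelIsLimit _)

theorem exactAt_iff_function_exact (n : ℤ) :
    P.ExactAt n ↔ Function.Exact (P.d (n + 1) n).hom (P.d n (n - 1)).hom := by
  rw [P.exactAt_iff' (n + 1) n (n - 1) (by simp) (by simp)]
  exact ShortComplex.ShortExact.moduleCat_exact_iff_function_exact _

@[simp]
theorem d_d_apply (l m n : ℤ) (x : P.X l) : (P.d m n).hom ((P.d l m).hom x) = 0 :=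
  LinearMap.congr_fun (congrArg ModuleCat.Hom.hom (P.d_comp_d l m n)) x

end ChainComplex

theorem isTotallyAcyclicProjComplex_iff (P : ChainComplex (ModuleCat.{u} A) ℤ) :
    IsTotallyAcyclicProjComplex _ P ↔
      (∀ n, Module.Projective A (P.X n)) ∧
      (∀ n, Function.Exact (P.d (n + 1) n).hom (P.d n (n - 1)).hom) ∧
      ∀ Q : ModuleCat.{u} A, Projective Q → ∀ (n : ℤ) (f : P.X n →ₗ[A] Q),
        f ∘ₗ (P.d (n + 1) n).hom = 0 → ∃ g : P.X (n - 1) →ₗ[A] Q, g ∘ₗ (P.d n (n - 1)).hom = f := by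
  simp only [IsTotallyAcyclicProjComplex, ChainComplex.exactAt_iff_function_exact]
  refine and_congr (forall_congr' fun n => (IsProjective.iff_projective (P.X n)).symm)
    (and_congr Iff.rfl ?_)
  refine forall₂_congr fun Q _ => forall_congr' fun n => ?_
  constructor
  · intro h f hf
    obtain ⟨g, hg⟩ := h (ModuleCat.ofHom f) (by ext x; exact LinearMap.congr_fun hf x)
    exact ⟨g.hom, by ext x; exact ConcreteCategory.congr_hom hg x⟩
  · intro h f hf
    obtain ⟨g, hg⟩ := h f.hom (by ext x; exact ConcreteCategory.congr_hom hf x)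
    exact ⟨ModuleCat.ofHom g, by ext x; exact LinearMap.congr_fun hg x⟩

abbrev dfinsuppComplex {ι : Type} (P : ι → ChainComplex (ModuleCat.{u} A) ℤ) :
    ChainComplex (ModuleCat.{u} A) ℤ where
  X n := ModuleCat.of A (Π₀ i, (P i).X n)
  d m n := ModuleCat.ofHom (DFinsupp.mapRange.linearMap fun i => ((P i).d m n).hom)
  shape m n h := by ext x i; simp [(P i).shape m n h]
  d_comp_d' l m n _ _ := by ext x i; simp

abbrev prodComplex (P P' : ChainComplex (ModuleCat.{u} A) ℤ) :
    ChainComplex (ModuleCat.{u} A) ℤ where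
  X n := ModuleCat.of A (P.X n × P'.X n)
  d m n := ModuleCat.ofHom ((P.d m n).hom.prodMap (P'.d m n).hom)
  shape m n h := by ext x <;> simp [P.shape m n h, P'.shape m n h]
  d_comp_d' l m n _ _ := by ext x <;> simp

abbrev constComplex (Q : ModuleCat.{u} A) : ChainComplex (ModuleCat.{u} A) ℤ :=
  ChainComplex.of (fun _ => ModuleCat.of A (Q × Q))
    (fun _ => ModuleCat.ofHom (LinearMap.inl A Q Q ∘ₗ LinearMap.snd A Q Q))
    (fun _ => by ext x <;> simp)

theorem constComplex_d (Q : ModuleCat.{u} A) {i j : ℤ} (h : j + 1 = i) :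
    (constComplex Q).d i j = ModuleCat.ofHom (LinearMap.inl A Q Q ∘ₗ LinearMap.snd A Q Q) := by
  subst h
  exact ChainComplex.of_d (fun _ : ℤ => ModuleCat.of A (Q × Q)) (fun _ => _) j

theorem constComplex_exact_inl (Q : ModuleCat.{u} A) (j : ℤ) :
    Function.Exact (LinearMap.inl A Q Q) ((constComplex Q).d j (j - 1)).hom := by
  rw [constComplex_d Q (by ring), ModuleCat.hom_ofHom,
    LinearMap.inl_injective.comp_exact_iff_exact]
  exact Function.Exact.inl_snd

theorem constComplex_isTotallyAcyclic {Q : ModuleCat.{u} A} (hQ : Projective Q) :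
    IsTotallyAcyclicProjComplex _ (constComplex Q) := by
  have : Module.Projective A Q := (IsProjective.iff_projective Q).mpr hQ
  refine (isTotallyAcyclicProjComplex_iff _).mpr
    ⟨fun _ => inferInstanceAs (Module.Projective A (Q × Q)), fun n => ?_, fun R _ n f hf => ?_⟩
  · rw [constComplex_d Q rfl, ModuleCat.hom_ofHom]
    exact LinearMap.snd_surjective.comp_exact_iff_exact.mpr (constComplex_exact_inl Q n)
  · rw [constComplex_d Q rfl] at hf
    refine ⟨f ∘ₗ LinearMap.inr A Q Q ∘ₗ LinearMap.fst A Q Q, ?_⟩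
    rw [constComplex_d Q (by ring)]
    ext x
    · have hx : f (x, 0) = 0 := by simpa using LinearMap.congr_fun hf (0, x)
      simp only [LinearMap.coe_comp, Function.comp_apply, LinearMap.inl_apply, hx]
      exact map_zero f
    · simp

theorem IsTotallyAcyclicProjComplex.prodComplex {P P' : ChainComplex (ModuleCat.{u} A) ℤ}
    (h : IsTotallyAcyclicProjComplex _ P) (h' : IsTotallyAcyclicProjComplex _ P') :
    IsTotallyAcyclicProjComplex _ (prodComplex P P') := by
  obtain ⟨hproj, hexact, hlift⟩ := (isTotallyAcyclicProjComplex_iff P).mp h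
  obtain ⟨hproj', hexact', hlift'⟩ := (isTotallyAcyclicProjComplex_iff P').mp h'
  refine (isTotallyAcyclicProjComplex_iff _).mpr
    ⟨fun n => inferInstanceAs (Module.Projective A (P.X n × P'.X n)),
      fun n => (hexact n).linearMap_prodMap (hexact' n), fun Q hQ n f hf => ?_⟩
  obtain ⟨g, hg⟩ := hlift Q hQ n (f ∘ₗ LinearMap.inl A _ _) <| by
    ext x; simpa using LinearMap.congr_fun hf (x, 0)
  obtain ⟨g', hg'⟩ := hlift' Q hQ n (f ∘ₗ LinearMap.inr A _ _) <| by
    ext x; simpa using LinearMap.congr_fun hf (0, x)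
  refine ⟨g.coprod g', ?_⟩
  ext x
  · simpa using LinearMap.congr_fun hg x
  · simpa using LinearMap.congr_fun hg' x

theorem IsTotallyAcyclicProjComplex.dfinsuppComplex {ι : Type}
    {P : ι → ChainComplex (ModuleCat.{u} A) ℤ} (h : ∀ i, IsTotallyAcyclicProjComplex _ (P i)) :
    IsTotallyAcyclicProjComplex _ (dfinsuppComplex P) := by
  classical
  choose hproj hexact hlift using fun i => (isTotallyAcyclicProjComplex_iff (P i)).mp (h i)
  refine (isTotallyAcyclicProjComplex_iff _).mpr
    ⟨fun n => inferInstanceAs (Module.Projective A (Π₀ i, (P i).X n)),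
      fun n => Function.Exact.dfinsupp_mapRange fun i => hexact i n, fun Q hQ n f hf => ?_⟩
  choose g hg using fun i =>
    hlift i Q hQ n (f ∘ₗ DFinsupp.lsingle (M := fun i => (P i).X n) i) <| by
      ext x; simpa using LinearMap.congr_fun hf (DFinsupp.single i x)
  refine ⟨DFinsupp.lsum ℕ g, DFinsupp.lhom_ext fun i x => ?_⟩
  simpa using LinearMap.congr_fun (hg i) x

theorem isGorensteinProjective_iff {G : ModuleCat.{u} A} :
    IsGorensteinProjective G ↔ ∃ P : ChainComplex (ModuleCat.{u} A) ℤ,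
      IsTotallyAcyclicProjComplex _ P ∧ ∃ (j : ℤ) (ι : G →ₗ[A] P.X j),
        Function.Injective ι ∧ Function.Exact ι (P.d j (j - 1)).hom := by
  constructor
  · rintro ⟨P, hP, j, ⟨e⟩⟩
    let e' := (e ≪≫ P.cyclesIsoKer j).toLinearEquiv
    exact ⟨P, hP, j, (LinearMap.ker _).subtype ∘ₗ e'.toLinearMap,
      (Submodule.injective_subtype _).comp e'.injective,
      LinearEquiv.precomp_exact_iff_exact.mpr (LinearMap.exact_subtype_ker_map _)⟩
  · rintro ⟨P, hP, j, ι, hι, hexact⟩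
    let e := (LinearEquiv.ofInjective ι hι).trans
      (LinearEquiv.ofEq _ _ hexact.linearMap_ker_eq.symm)
    exact ⟨P, hP, j, ⟨e.toModuleIso ≪≫ (P.cyclesIsoKer j).symm⟩⟩

theorem IsGorensteinProjective.of_iso {G G' : ModuleCat.{u} A} (e : G' ≅ G)
    (h : IsGorensteinProjective G) : IsGorensteinProjective G' :=
  let ⟨P, hP, j, ⟨eG⟩⟩ := h
  ⟨P, hP, j, ⟨e ≪≫ eG⟩⟩

theorem IsGorensteinProjective.prod_of_projective {G Q : ModuleCat.{u} A}
    (hG : IsGorensteinProjective G) (hQ : Projective Q) :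
    IsGorensteinProjective (ModuleCat.of A (G × Q)) := by
  obtain ⟨P, hP, j, ι, hι, hexact⟩ := isGorensteinProjective_iff.mp hG
  exact isGorensteinProjective_iff.mpr ⟨prodComplex P (constComplex Q),
    hP.prodComplex (constComplex_isTotallyAcyclic hQ), j, ι.prodMap (LinearMap.inl A Q Q),
    Prod.map_injective.mpr ⟨hι, LinearMap.inl_injective⟩,
    hexact.linearMap_prodMap (constComplex_exact_inl Q j)⟩

theorem IsGorensteinProjective.dfinsupp (ι : Type) {G : ModuleCat.{u} A}
    (hG : IsGorensteinProjective G) : IsGorensteinProjective (ModuleCat.of A (Π₀ _ : ι, G)) := by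
  obtain ⟨P, hP, j, κ, hκ, hexact⟩ := isGorensteinProjective_iff.mp hG
  exact isGorensteinProjective_iff.mpr ⟨dfinsuppComplex fun _ : ι => P,
    IsTotallyAcyclicProjComplex.dfinsuppComplex fun _ => hP, j,
    DFinsupp.mapRange.linearMap fun _ => κ,
    DFinsupp.mapRange_injective _ (fun _ => map_zero κ) |>.mpr fun _ => hκ,
    Function.Exact.dfinsupp_mapRange fun _ => hexact⟩

theorem IsGorensteinProjective.exists_isShortExactSeq {G : ModuleCat.{u} A}
    (hG : IsGorensteinProjective G) :
    ∃ (S Q : ModuleCat.{u} A) (f : S ⟶ Q) (g : Q ⟶ G),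
      IsShortExactSeq f g ∧ IsGorensteinProjective S ∧ Projective Q := by
  obtain ⟨P, hP, j, ι, hι, hexact⟩ := isGorensteinProjective_iff.mp hG
  obtain ⟨hproj, hPexact, -⟩ := (isTotallyAcyclicProjComplex_iff P).mp hP
  let e : G ≃ₗ[A] LinearMap.ker (P.d j (j - 1)).hom := (LinearEquiv.ofInjective ι hι).trans
    (LinearEquiv.ofEq _ _ hexact.linearMap_ker_eq.symm)
  let π : P.X (j + 1) →ₗ[A] G :=
    e.symm.toLinearMap ∘ₗ (P.d (j + 1) j).hom.codRestrict (LinearMap.ker (P.d j (j - 1)).hom)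
      fun x => by simp
  refine ⟨ModuleCat.of A (LinearMap.ker (P.d (j + 1) j).hom), P.X (j + 1),
    ModuleCat.ofHom (LinearMap.ker _).subtype, ModuleCat.ofHom π,
    (isShortExactSeq_iff _ _).mpr ⟨Submodule.injective_subtype _, ?_, ?_⟩, ?_,
    (IsProjective.iff_projective _).mp (hproj (j + 1))⟩
  · intro x
    simp [π, Subtype.ext_iff]
  · intro g
    obtain ⟨x, hx⟩ := (hPexact j (e g)).mp (e g).2
    exact ⟨x, e.symm_apply_eq.mpr (Subtype.ext hx)⟩
  · refine isGorensteinProjective_iff.mpr ⟨P, hP, j + 1, (LinearMap.ker _).subtype,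
      Submodule.injective_subtype _, ?_⟩
    rw [show j + 1 - 1 = j by ring]
    exact LinearMap.exact_subtype_ker_map _

theorem gpdLE.of_iso {M M' : ModuleCat.{u} A} (e : M ≅ M') : ∀ {n : ℕ}, gpdLE n M → gpdLE n M'
  | 0, h => IsGorensteinProjective.of_iso e.symm h
  | _ + 1, ⟨K, G, f, g, hfg, hG, hK⟩ => ⟨K, G, f, g ≫ e.hom, hfg.comp_iso e, hG, hK⟩

theorem gpdLE.prod_of_projective {Q : ModuleCat.{u} A} (hQ : Projective Q) :
    ∀ {n : ℕ} {X : ModuleCat.{u} A}, gpdLE n X → gpdLE n (ModuleCat.of A (X × Q))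
  | 0, _, h => IsGorensteinProjective.prod_of_projective h hQ
  | _ + 1, _, ⟨K, G, f, g, hses, hG, hK⟩ => by
    obtain ⟨hf, hfg, hg⟩ := (isShortExactSeq_iff f g).mp hses
    refine ⟨K, ModuleCat.of A (G × Q), ModuleCat.ofHom (LinearMap.inl A G Q ∘ₗ f.hom),
      ModuleCat.ofHom (g.hom.prodMap LinearMap.id), (isShortExactSeq_iff _ _).mpr
        ⟨LinearMap.inl_injective.comp hf, ?_,
          Prod.map_surjective.mpr ⟨hg, Function.surjective_id⟩⟩,
      hG.prod_of_projective hQ, hK⟩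
    rintro ⟨y, c⟩
    simp only [ModuleCat.hom_ofHom, LinearMap.prodMap_apply, LinearMap.id_apply, Prod.mk_eq_zero,
      hfg y, Set.mem_range, LinearMap.coe_comp, Function.comp_apply, LinearMap.inl_apply,
      Prod.mk.injEq]
    exact ⟨fun ⟨⟨x, hx⟩, hc⟩ => ⟨x, hx, hc.symm⟩, fun ⟨x, hx, hc⟩ => ⟨⟨x, hx⟩, hc.symm⟩⟩

theorem gpdLE.dfinsupp (ι : Type) :
    ∀ {n : ℕ} {G : ModuleCat.{u} A}, gpdLE n G → gpdLE n (ModuleCat.of A (Π₀ _ : ι, G))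
  | 0, _, h => IsGorensteinProjective.dfinsupp ι h
  | _ + 1, _, ⟨K, G, f, g, hses, hG, hK⟩ => by
    obtain ⟨hf, hfg, hg⟩ := (isShortExactSeq_iff f g).mp hses
    exact ⟨ModuleCat.of A (Π₀ _ : ι, K), ModuleCat.of A (Π₀ _ : ι, G),
      ModuleCat.ofHom (DFinsupp.mapRange.linearMap fun _ => f.hom),
      ModuleCat.ofHom (DFinsupp.mapRange.linearMap fun _ => g.hom),
      (isShortExactSeq_iff _ _).mpr
        ⟨(DFinsupp.mapRange_injective _ fun _ => map_zero f.hom).mpr fun _ => hf,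
          Function.Exact.dfinsupp_mapRange fun _ => hfg,
          (DFinsupp.mapRange_surjective _ fun _ => map_zero g.hom).mpr fun _ => hg⟩,
      hG.dfinsupp ι, hK.dfinsupp ι⟩

namespace IsShortExactSeq

mutual

theorem gpdLE_mid {X Y Z : ModuleCat.{u} A} {f : X ⟶ Y} {g : Y ⟶ Z} (h : IsShortExactSeq f g)
    {a s : ℕ} (hX : gpdLE a X) (hZ : gpdLE s Z) : gpdLE (s + a + 1) Y := by
  match s, hZ with
  | 0, hZ =>
    obtain ⟨S, Q, i, q, hiq, hS, hQ⟩ := hZ.exists_isShortExactSeq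
    obtain ⟨E, i', g', f', q', hig', hfq'⟩ := h.exists_pullback hiq
    obtain ⟨e⟩ := hfq'.nonempty_iso_prod hQ
    exact hig'.gpdLE_right hS ((hX.prod_of_projective hQ).of_iso e.symm)
  | s + 1, ⟨K, G, k, p, hkp, hG, hK⟩ =>
    obtain ⟨E, k', g', f', p', hkg', hfp'⟩ := h.exists_pullback hkp
    have hE := hkg'.gpdLE_right hK (hfp'.gpdLE_mid hX (s := 0) hG)
    rwa [show s + 1 + a + 1 = s + (0 + a + 1) + 1 by omega]
termination_by 2 * (a + s) + 1

theorem gpdLE_right {X Y Z : ModuleCat.{u} A} {f : X ⟶ Y} {g : Y ⟶ Z} (h : IsShortExactSeq f g)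
    {s e : ℕ} (hX : gpdLE s X) (hY : gpdLE e Y) : gpdLE (s + e + 1) Z := by
  match e, hY with
  | 0, hY => exact ⟨X, Y, f, g, h, hY, hX⟩
  | e + 1, ⟨K, G, k, p, hkp, hG, hK⟩ =>
    obtain ⟨T, a, b, c, hab, hc⟩ := hkp.exists_ker_comp h
    exact ⟨T, G, c, p ≫ g, hc, hG, hab.gpdLE_mid hK hX⟩
termination_by 2 * (s + e)

end

end IsShortExactSeq

section Shift

variable {N : Type*} [AddCommGroup N] [Module A N]

variable (A N) in
noncomputable def shiftDown : (Π₀ _ : ℕ, N) →ₗ[A] Π₀ _ : ℕ, N where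
  toFun y := y.comapDomain Nat.succ Nat.succ_injective
  map_add' := DFinsupp.comapDomain_add _ _
  map_smul' := DFinsupp.comapDomain_smul _ _

variable (A N) in
def shiftUp : (Π₀ _ : ℕ, N) →ₗ[A] Π₀ _ : ℕ, N :=
  DFinsupp.lsum ℕ fun i => DFinsupp.lsingle (M := fun _ : ℕ => N) (i + 1)

@[simp]
theorem shiftDown_single_zero (a : N) : shiftDown A N (DFinsupp.single 0 a) = 0 := by
  ext i
  simp [shiftDown]

@[simp]
theorem shiftDown_single_succ (i : ℕ) (a : N) :
    shiftDown A N (DFinsupp.single (i + 1) a) = DFinsupp.single i a :=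
  DFinsupp.comapDomain_single (β := fun _ : ℕ => N) Nat.succ Nat.succ_injective i a

@[simp]
theorem shiftUp_single (i : ℕ) (a : N) :
    shiftUp A N (DFinsupp.single i a) = DFinsupp.single (i + 1) a := by
  simp [shiftUp]

end Shift

theorem exists_isShortExactSeq_of_retract {M G : ModuleCat.{u} A} {s : M ⟶ G} {r : G ⟶ M}
    (hsr : s ≫ r = 𝟙 M) :
    ∃ (ξ : ModuleCat.of A (Π₀ _ : ℕ, G) ⟶ ModuleCat.of A (Π₀ _ : ℕ, G))
      (π : ModuleCat.of A (Π₀ _ : ℕ, G) ⟶ M), IsShortExactSeq ξ π := by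
  have hrs : ∀ m, r.hom (s.hom m) = m := fun m => ConcreteCategory.congr_hom hsr m
  let e := s.hom ∘ₗ r.hom
  let e' := LinearMap.id - e
  let ξ := DFinsupp.mapRange.linearMap (fun _ => e') +
    shiftUp A G ∘ₗ DFinsupp.mapRange.linearMap (fun _ => e)
  let β := DFinsupp.mapRange.linearMap (fun _ => e') +
    shiftDown A G ∘ₗ DFinsupp.mapRange.linearMap (fun _ => e)
  let π := r.hom ∘ₗ DFinsupp.lapply (M := fun _ : ℕ => G) 0
  let σ := DFinsupp.lsingle (M := fun _ : ℕ => G) 0 ∘ₗ s.hom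
  refine ⟨ModuleCat.ofHom ξ, ModuleCat.ofHom π, isShortExactSeq_of_splitting _ _
    (ModuleCat.ofHom β) (ModuleCat.ofHom σ) ?_ ?_ ?_⟩
  · ext1
    refine DFinsupp.lhom_ext fun i a => ?_
    simp [ξ, β, e, e', hrs, -DFinsupp.single_sub]
    rw [← DFinsupp.single_add, sub_add_cancel]
  · ext1
    ext m
    simp [π, σ, hrs]
  · ext1
    refine DFinsupp.lhom_ext fun i a => ?_
    cases i <;> simp [ξ, β, π, σ, e, e', hrs, -DFinsupp.single_sub] <;>
      rw [← DFinsupp.single_add, sub_add_cancel]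

end

/-- The class of modules of finite Gorenstein projective dimension is closed under
extensions and under direct summands. -/
theorem finite_gpd_closed_extensions_and_summands {A : Type u} [Ring A] :
    (∀ {X Y Z : ModuleCat.{u} A} (f : X ⟶ Y) (g : Y ⟶ Z), IsShortExactSeq f g →
      (∃ n : ℕ, gpdLE n X) → (∃ n : ℕ, gpdLE n Z) → ∃ n : ℕ, gpdLE n Y) ∧
    (∀ {G M : ModuleCat.{u} A} (s : M ⟶ G) (r : G ⟶ M), s ≫ r = 𝟙 M →
      (∃ n : ℕ, gpdLE n G) → ∃ n : ℕ, gpdLE n M) := by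
  refine ⟨fun _ _ h ⟨_, hX⟩ ⟨_, hZ⟩ => ⟨_, h.gpdLE_mid hX hZ⟩, fun _ _ hsr ⟨_, hG⟩ => ?_⟩
  obtain ⟨_, _, h⟩ := exists_isShortExactSeq_of_retract hsr
  exact ⟨_, h.gpdLE_right (hG.dfinsupp ℕ) (hG.dfinsupp ℕ)⟩
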